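/- Let n ≥ 3 be an odd integer and q > 0 a real number. The vector Σ_{j=1}^n q^{−j} u_{n+j} ⊗ e_{{j}} ∈ V ⊗ S satisfies (Y_k ⊗ K_k^{−1/2} + K_k^{1/2} ⊗ Y_k)(Σ_{j=1}^n q^{−j} u_{n+j} ⊗ e_{{j}}) = 0 for every k ∈ {1,…,n}, where in the first summand Y_k (= Y_k^V) acts on V and K_k^{−1/2} acts on S, and in the second summand K_k^{1/2} acts on V and Y_k acts on S; that is, it is a lowest weight vector defining an embedding of U₋ into V ⊗ U₊ over U_q(so_{2n}). -/
import Mathlib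


open scoped TensorProduct Classical

noncomputable section

/-- Subsets of `{1,…,n}`, the index set for the basis of the spinor space `S`. -/
abbrev SIdx (n : ℕ) : Type := {X : Finset ℕ // X ∈ (Finset.Icc 1 n).powerset}

/-- The spinor space `S`, with basis `(e_X)` indexed by subsets of `{1,…,n}`. -/
abbrev Sp (n : ℕ) : Type := SIdx n → ℂ

/-- The basis vector `e_X`. -/
def eB (n : ℕ) (X : SIdx n) : Sp n := Pi.single X 1

/-- `I₁(X) = Σ_{k∈X} k − |X|·n`. -/
def I1 (n : ℕ) (X : Finset ℕ) : ℤ := (∑ k ∈ X, (k : ℤ)) - X.card * n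

/-- `I_i(X) = I₁(X) + |{k ∈ X : k < i}| − (i−1)`. -/
def Ilow (n i : ℕ) (X : Finset ℕ) : ℤ :=
  I1 n X + ((X.filter (fun k => k < i)).card : ℤ) - ((i : ℤ) - 1)

/-- `I_{n+i}(X) = I₁(X) + |{k ∈ X : k < i}| − (n−1)`. -/
def Ihigh (n i : ℕ) (X : Finset ℕ) : ℤ :=
  I1 n X + ((X.filter (fun k => k < i)).card : ℤ) - ((n : ℤ) - 1)

def eraseIdx (n : ℕ) (X : SIdx n) (i : ℕ) : SIdx n :=
  ⟨(X : Finset ℕ).erase i,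
    Finset.mem_powerset.2 ((Finset.erase_subset _ _).trans (Finset.mem_powerset.1 X.2))⟩

def insertIdx (n : ℕ) (X : SIdx n) (i : ℕ) (h : i ∈ Finset.Icc 1 n) : SIdx n :=
  ⟨insert i (X : Finset ℕ),
    Finset.mem_powerset.2 (Finset.insert_subset h (Finset.mem_powerset.1 X.2))⟩

/-- The creation operator `a_i†`: `a_i† e_X = (−1)^{|{k ∈ X : k < i}|} e_{X∪{i}}` if `i ∉ X`,
and `a_i† e_X = 0` otherwise. -/
def adag (n i : ℕ) : Sp n →ₗ[ℂ] Sp n where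
  toFun f := fun X =>
    if i ∈ (X : Finset ℕ) then
      ((-1 : ℂ) ^ ((((X : Finset ℕ).erase i).filter (fun k => k < i)).card)) *
        f (eraseIdx n X i)
    else 0
  map_add' f g := by
    funext X; by_cases h : i ∈ (X : Finset ℕ) <;> simp [h] <;> ring
  map_smul' a f := by
    funext X; by_cases h : i ∈ (X : Finset ℕ) <;> simp [h] <;> ring

/-- The annihilation operator `a_i`: `a_i e_X = (−1)^{|{k ∈ X : k < i}|} e_{X∖{i}}` if `i ∈ X`,
and `a_i e_X = 0` otherwise. -/
def aop (n i : ℕ) : Sp n →ₗ[ℂ] Sp n where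
  toFun f := fun X =>
    if h : i ∈ Finset.Icc 1 n ∧ i ∉ (X : Finset ℕ) then
      ((-1 : ℂ) ^ (((insert i (X : Finset ℕ)).filter (fun k => k < i)).card)) *
        f (insertIdx n X i h.1)
    else 0
  map_add' f g := by
    funext X
    by_cases h : i ∈ Finset.Icc 1 n ∧ i ∉ (X : Finset ℕ)
    · simp only [dif_pos h, Pi.add_apply, mul_add]
    · simp only [dif_neg h, Pi.add_apply, add_zero]
  map_smul' a f := by
    funext X
    by_cases h : i ∈ Finset.Icc 1 n ∧ i ∉ (X : Finset ℕ)
    · simp only [dif_pos h, Pi.smul_apply, smul_eq_mul, RingHom.id_apply]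
      ring
    · simp only [dif_neg h, Pi.smul_apply, smul_eq_mul, RingHom.id_apply, mul_zero]

/-- The raising Chevalley generator: `X_i = −a_{i+1} a_i†` for `1 ≤ i ≤ n−1` and
`X_n = a_n† a_{n−1}†`. -/
def Xop (n i : ℕ) : Sp n →ₗ[ℂ] Sp n :=
  if i = n then (adag n n).comp (adag n (n - 1))
  else -((aop n (i + 1)).comp (adag n i))

/-- The lowering Chevalley generator: `Y_i = −a_i a_{i+1}†` for `1 ≤ i ≤ n−1` and
`Y_n = a_n a_{n−1}`. -/
def Yop (n i : ℕ) : Sp n →ₗ[ℂ] Sp n :=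
  if i = n then (aop n n).comp (aop n (n - 1))
  else -((aop n i).comp (adag n (i + 1)))

/-- `ẽ_i = Σ_{(X′,X″)∈Ω_i} σ_i(X′) e_{X′} ⊗ e_{X″}`, where `Ω_i` consists of pairs with
`X′ ∪ X″ = {1,…,n}`, `X′ ∩ X″ = {i}`, `|X′|` odd, and `σ_i(X) = (−1)^{I_i(X)}`. -/
def eTlow (n i : ℕ) : Sp n ⊗[ℂ] Sp n :=
  ∑ p ∈ Finset.univ.filter (fun p : SIdx n × SIdx n =>
      (p.1 : Finset ℕ) ∪ (p.2 : Finset ℕ) = Finset.Icc 1 n ∧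
      (p.1 : Finset ℕ) ∩ (p.2 : Finset ℕ) = {i} ∧ Odd (p.1 : Finset ℕ).card),
    ((-1 : ℂ) ^ (Ilow n i (p.1 : Finset ℕ))) • (eB n p.1 ⊗ₜ[ℂ] eB n p.2)

/-- `ẽ_{n+i} = (−1)^i Σ_{(X′,X″)∈Ω_{n+i}} σ_{n+i}(X′) e_{X′} ⊗ e_{X″}`, where `Ω_{n+i}`
consists of pairs of disjoint sets with `X′ ∪ X″ = {1,…,n} ∖ {i}` and `|X′|` odd, and
`σ_{n+i}(X) = (−1)^{I_{n+i}(X)}`. -/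
def eThigh (n i : ℕ) : Sp n ⊗[ℂ] Sp n :=
  ((-1 : ℂ) ^ i) •
    ∑ p ∈ Finset.univ.filter (fun p : SIdx n × SIdx n =>
        (p.1 : Finset ℕ) ∪ (p.2 : Finset ℕ) = (Finset.Icc 1 n) \ {i} ∧
        Disjoint (p.1 : Finset ℕ) (p.2 : Finset ℕ) ∧ Odd (p.1 : Finset ℕ).card),
      ((-1 : ℂ) ^ (Ihigh n i (p.1 : Finset ℕ))) • (eB n p.1 ⊗ₜ[ℂ] eB n p.2)

/-- The vector representation `V = ℂ^{2n}`; the coordinate `x` corresponds to the basis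
vector `u_{x+1}` (1-based indexing). -/
abbrev Vsp (n : ℕ) : Type := Fin (2 * n) → ℂ

/-- The basis vector `u_j` of `V` (1-based). -/
def uB (n j : ℕ) : Vsp n := fun x => if (x : ℕ) + 1 = j then 1 else 0

/-- The `l`-th coordinate functional on `V` (1-based). -/
def coordL (n l : ℕ) : Vsp n →ₗ[ℂ] ℂ where
  toFun f := ∑ x : Fin (2 * n), (if (x : ℕ) + 1 = l then 1 else 0) * f x
  map_add' f g := by simp [mul_add, Finset.sum_add_distrib]
  map_smul' a f := by
    simp only [Pi.smul_apply, smul_eq_mul, RingHom.id_apply, Finset.mul_sum]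
    exact Finset.sum_congr rfl fun x _ => by ring

/-- The matrix unit `E_{kl}`, acting by `E_{kl} u_m = δ_{lm} u_k`. -/
def matUnit (n k l : ℕ) : Vsp n →ₗ[ℂ] Vsp n := (coordL n l).smulRight (uB n k)

/-- The raising generator on `V`: `X_i = E_{i,i+1} − E_{n+i+1,n+i}` for `1 ≤ i ≤ n−1` and
`X_n = E_{n−1,2n} − E_{n,2n−1}`. -/
def XV (n i : ℕ) : Vsp n →ₗ[ℂ] Vsp n :=
  if i = n then matUnit n (n - 1) (2 * n) - matUnit n n (2 * n - 1)
  else matUnit n i (i + 1) - matUnit n (n + i + 1) (n + i)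

/-- The lowering generator on `V`: `Y_i = E_{i+1,i} − E_{n+i,n+i+1}` for `1 ≤ i ≤ n−1` and
`Y_n = E_{2n−1,n} − E_{2n,n−1}`. -/
def YV (n i : ℕ) : Vsp n →ₗ[ℂ] Vsp n :=
  if i = n then matUnit n (2 * n - 1) n - matUnit n (2 * n) (n - 1)
  else matUnit n (i + 1) i - matUnit n (n + i) (n + i + 1)

/-- `h_i(X)`: the eigenvalue of the coroot `H_i` on the weight vector `e_X`. -/
def hS (n i : ℕ) (X : Finset ℕ) : ℤ :=
  if i = n then (if n - 1 ∈ X then (1 : ℤ) else 0) + (if n ∈ X then (1 : ℤ) else 0) - 1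
  else (if i ∈ X then (1 : ℤ) else 0) - (if i + 1 ∈ X then (1 : ℤ) else 0)

/-- The operator `K_i^{±1/2}` on `S`, acting on `e_X` by `q^{±h_i(X)/2}`
(`ε = 1` gives `K_i^{1/2}`, `ε = −1` gives `K_i^{−1/2}`). -/
def Khalf (n : ℕ) (q : ℝ) (i : ℕ) (ε : ℤ) : Sp n →ₗ[ℂ] Sp n where
  toFun f := fun X => ((q ^ ((((ε * hS n i (X : Finset ℕ)) : ℤ) : ℝ) / 2) : ℝ) : ℂ) * f X
  map_add' f g := by funext X; simp [mul_add]
  map_smul' a f := by funext X; simp; ring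

/-- `h_i^V(j)`: the eigenvalue of the coroot `H_i` on the basis vector `u_j` of `V`. -/
def hV (n i j : ℕ) : ℤ :=
  if j ≤ n then
    (if i = n then (if j = n - 1 then (1 : ℤ) else 0) + (if j = n then (1 : ℤ) else 0)
     else (if j = i then (1 : ℤ) else 0) - (if j = i + 1 then (1 : ℤ) else 0))
  else
    -(if i = n then (if j - n = n - 1 then (1 : ℤ) else 0) + (if j - n = n then (1 : ℤ) else 0)
      else (if j - n = i then (1 : ℤ) else 0) - (if j - n = i + 1 then (1 : ℤ) else 0))

/-- The operator `K_i^{±1/2}` on `V`, acting on `u_j` by `q^{±h_i^V(j)/2}`. -/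
def KhalfV (n : ℕ) (q : ℝ) (i : ℕ) (ε : ℤ) : Vsp n →ₗ[ℂ] Vsp n where
  toFun f := fun x => ((q ^ ((((ε * hV n i ((x : ℕ) + 1)) : ℤ) : ℝ) / 2) : ℝ) : ℂ) * f x
  map_add' f g := by funext x; simp [mul_add]
  map_smul' a f := by funext x; simp; ring

/-- The vector `Σ_{j=1}^n q^{−j} u_{n+j} ⊗ e_{{j}} ∈ V ⊗ S`. -/
def lwVSq (n : ℕ) (q : ℝ) : Vsp n ⊗[ℂ] Sp n :=
  ∑ j ∈ (Finset.Icc 1 n).attach,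
    ((q : ℂ) ^ (-(j : ℕ) : ℤ)) •
      (uB n (n + (j : ℕ)) ⊗ₜ[ℂ]
        eB n ⟨{(j : ℕ)}, Finset.mem_powerset.2 (Finset.singleton_subset_iff.2 j.2)⟩)

lemma eB_apply (n : ℕ) (X Y : SIdx n) : eB n X Y = if Y = X then 1 else 0 := by
  simp [eB, Pi.single_apply]

lemma coordL_uB (n l m : ℕ) (h1 : 1 ≤ l) (h2 : l ≤ 2*n) :
    coordL n l (uB n m) = if l = m then 1 else 0 := by
  have hx : (l - 1) < 2 * n := by omega
  unfold coordL uB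
  simp only [LinearMap.coe_mk, AddHom.coe_mk]
  rw [Finset.sum_eq_single_of_mem (⟨l-1, hx⟩ : Fin (2*n)) (Finset.mem_univ _)]
  · have : ((⟨l-1, hx⟩ : Fin (2*n)) : ℕ) + 1 = l := by simp; omega
    rw [this, if_pos rfl, one_mul]
  · intro b _ hb
    rw [if_neg, zero_mul]
    intro hbl
    apply hb
    apply Fin.ext
    simp only []
    omega

lemma matUnit_uB (n a l m : ℕ) (h1 : 1 ≤ l) (h2 : l ≤ 2*n) :
    matUnit n a l (uB n m) = (if l = m then (1:ℂ) else 0) • uB n a := by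
  rw [matUnit, LinearMap.smulRight_apply, coordL_uB n l m h1 h2]

lemma YV_lt_ne (n k j : ℕ) (hk1 : 1 ≤ k) (hk : k < n) (hj1 : 1 ≤ j) (hne : j ≠ k+1) :
    YV n k (uB n (n+j)) = 0 := by
  rw [YV, if_neg (by omega), LinearMap.sub_apply,
    matUnit_uB n (k+1) k (n+j) (by omega) (by omega),
    matUnit_uB n (n+k) (n+k+1) (n+j) (by omega) (by omega),
    if_neg (by omega), if_neg (by omega), zero_smul, zero_smul, sub_zero]

lemma YV_lt_eq (n k : ℕ) (hk1 : 1 ≤ k) (hk : k < n) :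
    YV n k (uB n (n+(k+1))) = -uB n (n+k) := by
  rw [YV, if_neg (by omega), LinearMap.sub_apply,
    matUnit_uB n (k+1) k (n+(k+1)) (by omega) (by omega),
    matUnit_uB n (n+k) (n+k+1) (n+(k+1)) (by omega) (by omega),
    if_neg (by omega), if_pos (by omega), zero_smul, one_smul, zero_sub]

lemma YV_n (n j : ℕ) (hn : 3 ≤ n) (hj1 : 1 ≤ j) :
    YV n n (uB n (n+j)) = 0 := by
  rw [YV, if_pos rfl, LinearMap.sub_apply,
    matUnit_uB n (2*n-1) n (n+j) (by omega) (by omega),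
    matUnit_uB n (2*n) (n-1) (n+j) (by omega) (by omega),
    if_neg (by omega), if_neg (by omega), zero_smul, zero_smul, sub_zero]

lemma Khalf_eB (n : ℕ) (q : ℝ) (i : ℕ) (ε : ℤ) (X : SIdx n) :
    Khalf n q i ε (eB n X)
      = (((q ^ ((((ε * hS n i (X : Finset ℕ)) : ℤ) : ℝ) / 2) : ℝ) : ℂ)) • eB n X := by
  funext Y
  simp only [Khalf, LinearMap.coe_mk, AddHom.coe_mk, Pi.smul_apply, smul_eq_mul, eB_apply]
  by_cases h : Y = X
  · subst h; simp
  · simp [h]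

lemma KhalfV_uB (n : ℕ) (q : ℝ) (i : ℕ) (ε : ℤ) (m : ℕ) :
    KhalfV n q i ε (uB n m)
      = (((q ^ ((((ε * hV n i m) : ℤ) : ℝ) / 2) : ℝ) : ℂ)) • uB n m := by
  funext x
  simp only [KhalfV, LinearMap.coe_mk, AddHom.coe_mk, Pi.smul_apply, smul_eq_mul, uB]
  by_cases h : (x : ℕ) + 1 = m
  · rw [h]
  · simp [h]

lemma Yop_eB_ne (n k j : ℕ) (hkn : k ≠ n) (hjk : j ≠ k)
    (h : ({j} : Finset ℕ) ∈ (Finset.Icc 1 n).powerset) :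
    Yop n k (eB n ⟨{j}, h⟩) = 0 := by
  rw [Yop, if_neg hkn]
  funext X
  simp only [LinearMap.neg_apply, LinearMap.comp_apply, Pi.neg_apply, Pi.zero_apply,
    aop, adag, LinearMap.coe_mk, AddHom.coe_mk, neg_eq_zero]
  split_ifs with h1 h2
  · rw [eB_apply, if_neg, mul_zero, mul_zero]
    intro heq
    have hfin : ((insertIdx n X k h1.1 : SIdx n) : Finset ℕ).erase (k+1) = {j} :=
      congrArg Subtype.val heq
    have : k ∈ ({j} : Finset ℕ) := by
      rw [← hfin]
      exact Finset.mem_erase.2 ⟨by omega, Finset.mem_insert_self _ _⟩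
    simp only [Finset.mem_singleton] at this
    omega
  · rw [mul_zero]
  · rfl

lemma Yop_eB_eq (n k : ℕ) (hk1 : 1 ≤ k) (hk : k < n)
    (h : ({k} : Finset ℕ) ∈ (Finset.Icc 1 n).powerset)
    (h' : ({k+1} : Finset ℕ) ∈ (Finset.Icc 1 n).powerset) :
    Yop n k (eB n ⟨{k}, h⟩) = eB n ⟨{k+1}, h'⟩ := by
  rw [Yop, if_neg (by omega)]
  funext X
  simp only [LinearMap.neg_apply, LinearMap.comp_apply, Pi.neg_apply,
    aop, adag, LinearMap.coe_mk, AddHom.coe_mk, eB_apply]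
  by_cases hX : X = ⟨{k+1}, h'⟩
  · subst hX
    rw [if_pos rfl]
    have hc1 : k ∈ Finset.Icc 1 n ∧ k ∉ (({k+1} : Finset ℕ)) := by
      refine ⟨Finset.mem_Icc.2 ⟨hk1, by omega⟩, by simp only [Finset.mem_singleton]; omega⟩
    rw [dif_pos hc1]
    have hm : k + 1 ∈ ((insertIdx n ⟨{k+1}, h'⟩ k hc1.1 : SIdx n) : Finset ℕ) := by
      simp [insertIdx]
    rw [if_pos hm]
    have herase : ((insertIdx n ⟨{k+1}, h'⟩ k hc1.1 : SIdx n) : Finset ℕ).erase (k+1)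
        = {k} := by
      simp only [insertIdx]
      ext x
      simp only [Finset.mem_erase, Finset.mem_insert, Finset.mem_singleton]
      omega
    have hErIdx : eraseIdx n (insertIdx n ⟨{k+1}, h'⟩ k hc1.1) (k+1) = ⟨{k}, h⟩ :=
      Subtype.ext herase
    rw [hErIdx, if_pos rfl]
    have hf1 : (Finset.filter (fun m => m < k)
        (insert k ((⟨{k+1}, h'⟩ : SIdx n) : Finset ℕ))).card = 0 := by
      rw [Finset.card_eq_zero, Finset.filter_eq_empty_iff]
      intro x hx
      simp only [Finset.mem_insert, Finset.mem_singleton] at hx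
      omega
    have hf2 : ((((insertIdx n ⟨{k+1}, h'⟩ k hc1.1 : SIdx n) : Finset ℕ).erase (k+1)).filter
        (fun m => m < k+1)).card = 1 := by
      rw [herase]
      rw [show ({k} : Finset ℕ).filter (fun m => m < k+1) = {k} by
        simp [Finset.filter_eq_self]]
      simp
    rw [hf1, hf2]
    norm_num
  · rw [if_neg hX]
    split_ifs with h1 h2 h3
    · exfalso
      have heq := h3
      have hfin : ((insertIdx n X k h1.1 : SIdx n) : Finset ℕ).erase (k+1) = {k} :=
        congrArg Subtype.val heq
      apply hX
      apply Subtype.ext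
      have hmem : k + 1 ∈ ((insertIdx n X k h1.1 : SIdx n) : Finset ℕ) := h2
      simp only [insertIdx, Finset.mem_insert] at hmem
      have hmem' : k + 1 ∈ (X : Finset ℕ) := by
        rcases hmem with h | h
        · omega
        · exact h
      ext x
      simp only [Finset.mem_singleton]
      constructor
      · intro hx
        by_contra hxne
        have : x ∈ ((insertIdx n X k h1.1 : SIdx n) : Finset ℕ).erase (k+1) := by
          simp only [insertIdx, Finset.mem_erase, Finset.mem_insert]
          exact ⟨hxne, Or.inr hx⟩
        rw [hfin] at this
        simp only [Finset.mem_singleton] at this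
        subst this
        exact h1.2 hx
      · intro hx; subst hx; exact hmem'
    · simp
    · simp
    · simp

lemma Yop_n (n j : ℕ) (hn : 3 ≤ n)
    (h : ({j} : Finset ℕ) ∈ (Finset.Icc 1 n).powerset) :
    Yop n n (eB n ⟨{j}, h⟩) = 0 := by
  rw [Yop, if_pos rfl]
  funext X
  simp only [LinearMap.comp_apply, Pi.zero_apply, aop, LinearMap.coe_mk, AddHom.coe_mk]
  split_ifs with h1 h2
  · rw [eB_apply, if_neg, mul_zero, mul_zero]
    intro heq
    have hfin : ((insertIdx n (insertIdx n X n h1.1) (n-1) h2.1 : SIdx n) : Finset ℕ)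
        = {j} := congrArg Subtype.val heq
    have hm1 : n - 1 ∈ ({j} : Finset ℕ) := by
      rw [← hfin]; simp [insertIdx]
    have hm2 : n ∈ ({j} : Finset ℕ) := by
      rw [← hfin]; simp [insertIdx]
    simp only [Finset.mem_singleton] at hm1 hm2
    omega
  · rw [mul_zero]
  · rfl
/-- `Σ_{j=1}^n q^{−j} u_{n+j} ⊗ e_{{j}}` is annihilated by
`Y_k ⊗ K_k^{−1/2} + K_k^{1/2} ⊗ Y_k` for every `k ∈ {1,…,n}`: it is a lowest weight vector
defining an embedding of `U₋` into `V ⊗ U₊` over `U_q(so_{2n})`. -/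
theorem stmt15 (n : ℕ) (hn : 3 ≤ n) (hodd : Odd n) (q : ℝ) (hq : 0 < q)
    (k : ℕ) (hk : k ∈ Finset.Icc 1 n) :
    (TensorProduct.map (YV n k) (Khalf n q k (-1))
        + TensorProduct.map (KhalfV n q k 1) (Yop n k)) (lwVSq n q) = 0 := by
  obtain ⟨hk1, hk2⟩ := Finset.mem_Icc.1 hk
  rw [LinearMap.add_apply, lwVSq, map_sum, map_sum]
  simp only [map_smul, TensorProduct.map_tmul]
  by_cases hkn : k = n
  · subst hkn
    rw [Finset.sum_eq_zero, Finset.sum_eq_zero, add_zero]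
    · intro j _
      rw [Yop_n k (j : ℕ) hn, TensorProduct.tmul_zero, smul_zero]
    · intro j _
      rw [YV_n k (j : ℕ) hn (Finset.mem_Icc.1 j.2).1, TensorProduct.zero_tmul, smul_zero]
  · have hklt : k < n := lt_of_le_of_ne hk2 hkn
    have hmem1 : k + 1 ∈ Finset.Icc 1 n := Finset.mem_Icc.2 ⟨by omega, by omega⟩
    rw [Finset.sum_eq_single_of_mem (⟨k+1, hmem1⟩ : {x // x ∈ Finset.Icc 1 n})
      (Finset.mem_attach _ _) (fun b _ hb => by
        rw [YV_lt_ne n k (b : ℕ) hk1 hklt (Finset.mem_Icc.1 b.2).1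
          (fun hc => hb (Subtype.ext hc)), TensorProduct.zero_tmul, smul_zero])]
    rw [Finset.sum_eq_single_of_mem (⟨k, hk⟩ : {x // x ∈ Finset.Icc 1 n})
      (Finset.mem_attach _ _) (fun b _ hb => by
        rw [Yop_eB_ne n k (b : ℕ) hkn (fun hc => hb (Subtype.ext hc)),
          TensorProduct.tmul_zero, smul_zero])]
    show ((q : ℂ) ^ (-((k+1 : ℕ)) : ℤ)) •
        ((YV n k) (uB n (n + (k+1))) ⊗ₜ[ℂ] (Khalf n q k (-1)) (eB n
          ⟨{k+1}, Finset.mem_powerset.2 (Finset.singleton_subset_iff.2 hmem1)⟩))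
      + ((q : ℂ) ^ (-(k : ℕ) : ℤ)) •
        ((KhalfV n q k 1) (uB n (n + k)) ⊗ₜ[ℂ] (Yop n k) (eB n
          ⟨{k}, Finset.mem_powerset.2 (Finset.singleton_subset_iff.2 hk)⟩)) = 0
    rw [YV_lt_eq n k hk1 hklt, Khalf_eB, KhalfV_uB,
      Yop_eB_eq n k hk1 hklt _ (Finset.mem_powerset.2 (Finset.singleton_subset_iff.2 hmem1))]
    have hS1 : hS n k (({k+1} : Finset ℕ)) = -1 := by
      rw [hS, if_neg hkn, if_neg (by simp only [Finset.mem_singleton]; omega),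
        if_pos (Finset.mem_singleton_self _)]
      norm_num
    have hV1 : hV n k (n + k) = -1 := by
      rw [hV, if_neg (by omega), if_neg hkn]
      rw [if_pos (by omega), if_neg (by omega)]
      norm_num
    rw [hS1, hV1]
    rw [TensorProduct.tmul_smul, TensorProduct.neg_tmul, ← TensorProduct.smul_tmul',
      smul_smul, smul_neg, smul_smul, ← neg_smul, ← add_smul]
    have h2 : ∀ (x : Vsp n ⊗[ℂ] Sp n) (c : ℂ), c = 0 → c • x = 0 := fun x c hc => by
      rw [hc, zero_smul]
    refine h2 _ _ ?_
    rw [← Complex.ofReal_zpow, ← Complex.ofReal_zpow, ← Complex.ofReal_mul,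
      ← Complex.ofReal_mul, ← Complex.ofReal_neg, ← Complex.ofReal_add,
      Complex.ofReal_eq_zero]
    rw [← Real.rpow_intCast q, ← Real.rpow_intCast q, ← Real.rpow_add hq, ← Real.rpow_add hq]
    rw [show (((-((k+1 : ℕ)) : ℤ) : ℝ) + ((-1 * -1 : ℤ) : ℝ) / 2)
        = (((-(k : ℕ) : ℤ) : ℝ) + ((1 * -1 : ℤ) : ℝ) / 2) from by push_cast; ring]
    exact neg_add_cancel _

end
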